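/- In Q[[x,y]], with L(x,y) = (1 − (2xy/(1−x))²)^(1/2), the series (1−x)^(−2)·( (x+1)/L(x,y) − (1/2)·((1−x)/(xy))²·(1 − L(x,y)) ) equals ∑_{n≥0} ∑_{k≥0} binomial(n, k+1)·binomial(n−k, k)·x^n·y^(2k). -/

import Mathlib

/-!
Write `u = xy/(1-x)` and let `c = ∑ catalan k Xᵏ`, so that `f = X c` solves `f = X + f²`.
Then `s = 1 - 2f` satisfies `s² = 1 - 4X`, and differentiating `f = X + f²` shows that
`f' = ∑ C(2k,k) Xᵏ` is the inverse of `s`. Substituting `X ↦ u²` (a ring homomorphism) turns `s`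
into a square root of `1 - 4u²` with constant term `1`, which must be `L`, and the defining
equation of `B` then forces `B = (1-x)⁻² ((x+1) f'(u²) - c(u²))`. Seen in `ℚ⟦x⟧⟦y⟧`, the
substitution is `Xᵏ ↦ (x/(1-x))^{2k} y^{2k}`, so the coefficient of `xⁿ y^{2k}` is
`C(2k,k) C(n,2k+1) + C(2k,k+1) C(n+1,2k+1)`, and two applications of `Nat.choose_mul`
followed by Pascal's rule turn this into `C(n,k+1) C(n-k,k)`.
-/

theorem Nat.choose_succ_mul_choose_sub (n k : ℕ) :
    n.choose (k + 1) * (n - k).choose k =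
      (2 * k).choose k * n.choose (2 * k + 1) +
        (2 * k).choose (k + 1) * (n + 1).choose (2 * k + 1) := by
  rcases k.eq_zero_or_pos with rfl | hk
  · simp
  rcases Nat.lt_or_ge n (k + 1) with hn | hn
  · simp [Nat.choose_eq_zero_of_lt hn, Nat.choose_eq_zero_of_lt (by omega : n < 2 * k + 1),
      Nat.choose_eq_zero_of_lt (by omega : n + 1 < 2 * k + 1)]
  have h₁ : n.choose (2 * k + 1) * (2 * k + 1).choose (k + 1) =
      n.choose (k + 1) * (n - k - 1).choose k := by
    rw [Nat.choose_mul (by omega)]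
    congr 2; omega
  have h₂ : n.choose (2 * k) * (2 * k).choose (k + 1) =
      n.choose (k + 1) * (n - k - 1).choose (k - 1) := by
    rw [Nat.choose_mul (by omega)]
    congr 2; omega
  have hpascal : (n - k).choose k = (n - k - 1).choose k + (n - k - 1).choose (k - 1) := by
    obtain ⟨m, hm⟩ : ∃ m, n - k = m + 1 := ⟨n - k - 1, by omega⟩
    obtain ⟨j, rfl⟩ : ∃ j, k = j + 1 := ⟨k - 1, by omega⟩
    rw [hm, Nat.choose_succ_succ', add_comm]
    simp
  rw [Nat.choose_succ_succ' n (2 * k), hpascal, mul_add, ← h₁, ← h₂,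
    Nat.choose_succ_succ' (2 * k) k]
  ring

theorem catalan_add_choose_succ (n : ℕ) :
    catalan n + (2 * n).choose (n + 1) = n.centralBinom := by
  have h := Nat.choose_succ_right_eq (2 * n) n
  have hc := succ_mul_catalan_eq_centralBinom n
  rw [← Nat.centralBinom_eq_two_mul_choose, show 2 * n - n = n by omega] at h
  apply Nat.eq_of_mul_eq_mul_left n.succ_pos
  linarith

lemma eq_of_sq_eq_sq_of_map_eq_one {A K F : Type*} [CommRing A] [NoZeroDivisors A] [CommRing K]
    [NeZero (2 : K)] [FunLike F A K] [RingHomClass F A K] (ε : F) {f g : A}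
    (h : f ^ 2 = g ^ 2) (hf : ε f = 1) (hg : ε g = 1) : f = g := by
  refine (sq_eq_sq_iff_eq_or_eq_neg.1 h).resolve_right fun hneg => two_ne_zero (α := K) ?_
  have := congrArg ε hneg
  rw [map_neg, hf, hg] at this
  linear_combination this

namespace PowerSeries

variable (R : Type*) [CommRing R]

noncomputable def castCatalanSeries : R⟦X⟧ := catalanSeries.map (Nat.castRingHom R)

noncomputable def centralBinomSeries : R⟦X⟧ := mk fun n => (n.centralBinom : R)

variable {R}

@[simp] lemma coeff_castCatalanSeries (n : ℕ) : coeff n (castCatalanSeries R) = catalan n := by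
  simp [castCatalanSeries]

@[simp] lemma coeff_centralBinomSeries (n : ℕ) :
    coeff n (centralBinomSeries R) = n.centralBinom :=
  coeff_mk _ _

lemma X_mul_castCatalanSeries_eq :
    X * castCatalanSeries R = X + (X * castCatalanSeries R) ^ 2 := by
  have h := congrArg (map (Nat.castRingHom R)) catalanSeries_sq_mul_X_add_one
  simp only [map_add, map_mul, map_pow, map_X, map_one] at h
  rw [castCatalanSeries]
  linear_combination (-X : R⟦X⟧) * h

lemma derivative_X_mul_castCatalanSeries :
    d⁄dX R (X * castCatalanSeries R) = centralBinomSeries R := by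
  ext n
  rw [coeff_derivative, coeff_succ_X_mul, coeff_castCatalanSeries, coeff_centralBinomSeries,
    ← succ_mul_catalan_eq_centralBinom]
  push_cast
  ring

lemma one_sub_two_X_mul_castCatalanSeries_sq :
    (1 - 2 * (X * castCatalanSeries R)) ^ 2 = 1 - 4 * X := by
  linear_combination (4 : R⟦X⟧) * (X_mul_castCatalanSeries_eq (R := R)).symm

lemma centralBinomSeries_mul_one_sub_two_X_mul_castCatalanSeries :
    centralBinomSeries R * (1 - 2 * (X * castCatalanSeries R)) = 1 := by
  have h := congrArg (d⁄dX R) (X_mul_castCatalanSeries_eq (R := R))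
  rw [map_add, derivative_pow, derivative_X, derivative_X_mul_castCatalanSeries] at h
  norm_num at h
  linear_combination h

lemma coeff_X_pow_mul_mk_one_pow (j n : ℕ) :
    coeff n ((X : R⟦X⟧) ^ j * (mk 1 : R⟦X⟧) ^ (j + 1)) = n.choose j := by
  rw [coeff_X_pow_mul', mk_one_pow_eq_mk_choose_add]
  split_ifs with h
  · rw [coeff_mk, Nat.add_sub_cancel' h]
  · rw [Nat.choose_eq_zero_of_lt (not_le.mp h), Nat.cast_zero]

/-- `f(X) ↦ f(t X²)` -/
noncomputable def rescaleSq (t : R) : R⟦X⟧ →+* R⟦X⟧ :=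
  (expand 2 two_ne_zero).toRingHom.comp (rescale t)

lemma coeff_two_mul_rescaleSq (t : R) (f : R⟦X⟧) (k : ℕ) :
    coeff (2 * k) (rescaleSq t f) = t ^ k * coeff k f := by
  simp [rescaleSq]

lemma coeff_two_mul_add_one_rescaleSq (t : R) (f : R⟦X⟧) (k : ℕ) :
    coeff (2 * k + 1) (rescaleSq t f) = 0 :=
  coeff_expand_of_not_dvd 2 two_ne_zero _ (by omega)

lemma constantCoeff_rescaleSq (t : R) (f : R⟦X⟧) :
    constantCoeff (rescaleSq t f) = constantCoeff f := by
  simpa using coeff_two_mul_rescaleSq t f 0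

lemma rescaleSq_X (t : R) : rescaleSq t X = C t * X ^ 2 := by
  simp [rescaleSq, rescale_X, expand_C, expand_X]

section Solution

variable (t : R)

noncomputable def seriesL : R⟦X⟧ := rescaleSq t (1 - 2 * (X * castCatalanSeries R))

/-- With `L = seriesL t` and `t = (x w)²`, `w = (1 - x)⁻¹`, this is
`w² ((x + 1) / L - (1 - L) / (2 t X²))`. -/
noncomputable def seriesB (x w : R) : R⟦X⟧ :=
  C (w ^ 2) * (C (x + 1) * rescaleSq ((x * w) ^ 2) (centralBinomSeries R) -
    rescaleSq ((x * w) ^ 2) (castCatalanSeries R))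

lemma seriesL_sq : seriesL t ^ 2 = 1 - 4 * C t * X ^ 2 := by
  rw [seriesL, ← map_pow, one_sub_two_X_mul_castCatalanSeries_sq]
  simp [rescaleSq_X, map_ofNat, mul_assoc]

lemma one_sub_seriesL :
    1 - seriesL t = 2 * C t * X ^ 2 * rescaleSq t (castCatalanSeries R) := by
  simp [seriesL, rescaleSq_X, map_ofNat]
  ring

lemma seriesL_mul_rescaleSq_centralBinomSeries :
    seriesL t * rescaleSq t (centralBinomSeries R) = 1 := by
  rw [seriesL, ← map_mul, mul_comm, centralBinomSeries_mul_one_sub_two_X_mul_castCatalanSeries,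
    map_one]

lemma constantCoeff_seriesL : constantCoeff (seriesL t) = 1 := by
  simp [seriesL, constantCoeff_rescaleSq]

lemma coeff_two_mul_seriesB (x w : R) (k : ℕ) :
    coeff (2 * k) (seriesB x w) =
      w ^ 2 * ((x + 1) * (((x * w) ^ 2) ^ k * k.centralBinom) -
        ((x * w) ^ 2) ^ k * catalan k) := by
  rw [seriesB, coeff_C_mul, map_sub, coeff_C_mul, coeff_two_mul_rescaleSq,
    coeff_two_mul_rescaleSq, coeff_centralBinomSeries, coeff_castCatalanSeries]

lemma coeff_two_mul_add_one_seriesB (x w : R) (k : ℕ) :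
    coeff (2 * k + 1) (seriesB x w) = 0 := by
  rw [seriesB, coeff_C_mul, map_sub, coeff_C_mul, coeff_two_mul_add_one_rescaleSq,
    coeff_two_mul_add_one_rescaleSq, mul_zero, sub_zero, mul_zero]

variable {x w : R} (hw : w * (1 - x) = 1)
include hw

lemma C_mul_one_sub_C_sq : C ((x * w) ^ 2) * (1 - C x) ^ 2 = C x ^ 2 := by
  rw [← map_one C, ← map_sub, ← map_pow, ← map_pow, ← map_mul]
  congr 1
  linear_combination x ^ 2 * (w * (1 - x) + 1) * hw

lemma seriesL_sq_mul_one_sub_C_sq :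
    seriesL ((x * w) ^ 2) ^ 2 * (1 - C x) ^ 2 = (1 - C x) ^ 2 - (2 * C x * X) ^ 2 := by
  rw [seriesL_sq]
  linear_combination (-4 * X ^ 2 : R⟦X⟧) * C_mul_one_sub_C_sq hw

lemma seriesB_spec :
    2 * C x ^ 2 * X ^ 2 * (1 - C x) ^ 2 * seriesL ((x * w) ^ 2) * seriesB x w =
      2 * C x ^ 2 * X ^ 2 * (C x + 1) -
        (1 - C x) ^ 2 * (1 - seriesL ((x * w) ^ 2)) * seriesL ((x * w) ^ 2) := by
  set ℓ := seriesL ((x * w) ^ 2)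
  set β := rescaleSq ((x * w) ^ 2) (centralBinomSeries R)
  set γ := rescaleSq ((x * w) ^ 2) (castCatalanSeries R)
  have hW : C (w ^ 2) * (1 - C x) ^ 2 = 1 := by
    rw [← map_one C, ← map_sub, ← map_pow, ← map_mul, ← mul_pow, hw, one_pow, map_one]
  rw [seriesB, map_add, map_one]
  linear_combination (2 * C x ^ 2 * X ^ 2 * ℓ * ((C x + 1) * β - γ)) * hW
    + (2 * C x ^ 2 * X ^ 2 * (C x + 1)) * seriesL_mul_rescaleSq_centralBinomSeries ((x * w) ^ 2)
    + ((1 - C x) ^ 2 * ℓ) * one_sub_seriesL ((x * w) ^ 2)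
    + (2 * X ^ 2 * γ * ℓ) * C_mul_one_sub_C_sq hw

end Solution

section Rational

lemma eq_seriesL {ℓ : ℚ⟦X⟧⟦X⟧}
    (h : ℓ ^ 2 * (1 - C X) ^ 2 = (1 - C X) ^ 2 - (2 * C X * X) ^ 2)
    (h₀ : constantCoeff (constantCoeff ℓ) = 1) :
    ℓ = seriesL ((X * mk 1) ^ 2) := by
  have hx : (1 - C X : ℚ⟦X⟧⟦X⟧) ^ 2 ≠ 0 :=
    pow_ne_zero _ (ne_zero_of_map (f := constantCoeff.comp constantCoeff) (by simp))
  refine eq_of_sq_eq_sq_of_map_eq_one (constantCoeff.comp constantCoeff)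
    (mul_right_cancel₀ hx ?_) h₀ (by simp [constantCoeff_seriesL])
  rw [h, seriesL_sq_mul_one_sub_C_sq (mk_one_mul_one_sub_eq_one ℚ)]

lemma eq_seriesB {β : ℚ⟦X⟧⟦X⟧}
    (h : 2 * C X ^ 2 * X ^ 2 * (1 - C X) ^ 2 * seriesL ((X * mk 1) ^ 2) * β =
      2 * C X ^ 2 * X ^ 2 * (C X + 1) -
        (1 - C X) ^ 2 * (1 - seriesL ((X * mk 1) ^ 2)) * seriesL ((X * mk 1) ^ 2)) :
    β = seriesB X (mk 1) := by
  refine mul_left_cancel₀ ?_ (h.trans (seriesB_spec (mk_one_mul_one_sub_eq_one ℚ)).symm)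
  have hε {f : ℚ⟦X⟧⟦X⟧} (hf : constantCoeff (constantCoeff f) ≠ 0) : f ≠ 0 :=
    ne_zero_of_map (f := constantCoeff.comp constantCoeff) hf
  have h2 : (2 : ℚ⟦X⟧⟦X⟧) ≠ 0 := hε (by rw [map_ofNat, map_ofNat]; norm_num)
  have hx : (1 - C X : ℚ⟦X⟧⟦X⟧) ≠ 0 := hε (by simp)
  have hℓ : seriesL ((X * mk 1 : ℚ⟦X⟧) ^ 2) ≠ 0 := hε (by simp [constantCoeff_seriesL])
  have hCX : (C X : ℚ⟦X⟧⟦X⟧) ≠ 0 := (map_ne_zero_iff _ C_injective).2 X_ne_zero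
  simp [h2, hx, hℓ, hCX, X_ne_zero]

lemma coeff_coeff_two_mul_seriesB_X_mk_one (n k : ℕ) :
    coeff n (coeff (2 * k) (seriesB (X : ℚ⟦X⟧) (mk 1))) =
      (n.choose (k + 1) * (n - k).choose k : ℚ) := by
  set W : ℚ⟦X⟧ := mk 1
  have h : W ^ 2 * ((X + 1) * (((X * W) ^ 2) ^ k * (k.centralBinom : ℚ⟦X⟧)) -
      ((X * W) ^ 2) ^ k * (catalan k : ℚ⟦X⟧)) =
      C (k.centralBinom : ℚ) * (X ^ (2 * k + 1) * W ^ (2 * k + 1 + 1)) +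
        C ((k.centralBinom : ℚ) - catalan k) * (X ^ (2 * k) * W ^ (2 * k + 1 + 1)) := by
    simp only [map_sub, map_natCast]
    ring
  have hchoose : (k.centralBinom : ℚ) - catalan k = (2 * k).choose (k + 1) := by
    rw [← catalan_add_choose_succ]
    push_cast
    ring
  rw [coeff_two_mul_seriesB, h, map_add, coeff_C_mul, coeff_C_mul, coeff_X_pow_mul_mk_one_pow,
    ← coeff_succ_X_mul, ← mul_assoc, ← pow_succ', coeff_X_pow_mul_mk_one_pow,
    hchoose, Nat.centralBinom_eq_two_mul_choose]
  exact_mod_cast (congrArg (Nat.cast : ℕ → ℚ) (Nat.choose_succ_mul_choose_sub n k)).symm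

end Rational

end PowerSeries

def finTwoEquivOptionUnit : Fin 2 ≃ Option Unit where
  toFun i := if i = 0 then some () else none
  invFun o := o.elim 1 fun _ => 0
  left_inv := by decide
  right_inv := by decide

namespace MvPowerSeries

variable (R : Type*) [CommSemiring R]

noncomputable def finTwoEquiv : MvPowerSeries (Fin 2) R ≃ₐ[R] PowerSeries (PowerSeries R) :=
  (renameEquiv R finTwoEquivOptionUnit).trans (optionEquivLeft Unit R)

variable {R}

lemma coeff_coeff_finTwoEquiv (p : MvPowerSeries (Fin 2) R) (n m : ℕ) :
    PowerSeries.coeff n (PowerSeries.coeff m (finTwoEquiv R p)) =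
      coeff (Finsupp.single 0 n + Finsupp.single 1 m) p := by
  have : (Finsupp.single () n).optionElim m =
      Finsupp.embDomain finTwoEquivOptionUnit.toEmbedding
        (Finsupp.single 0 n + Finsupp.single 1 m) := by
    ext (_ | _) <;> simp [Finsupp.embDomain_add, finTwoEquivOptionUnit]
  change coeff (Finsupp.single () n) _ = _
  rw [finTwoEquiv, AlgEquiv.trans_apply, coeff_coeff_optionEquivLeft, this]
  exact coeff_embDomain_rename finTwoEquivOptionUnit.toEmbedding p _

lemma constantCoeff_constantCoeff_finTwoEquiv (p : MvPowerSeries (Fin 2) R) :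
    PowerSeries.constantCoeff (PowerSeries.constantCoeff (finTwoEquiv R p)) =
      constantCoeff p := by
  simpa using coeff_coeff_finTwoEquiv p 0 0

@[simp] lemma finTwoEquiv_X_zero : finTwoEquiv R (X 0) = PowerSeries.C PowerSeries.X := by
  simp [finTwoEquiv, finTwoEquivOptionUnit, optionEquivLeft_X_some]
  rfl

@[simp] lemma finTwoEquiv_X_one : finTwoEquiv R (X 1) = PowerSeries.X := by
  simp [finTwoEquiv, finTwoEquivOptionUnit, optionEquivLeft_X_none]

end MvPowerSeries

open PowerSeries in
/-- In `ℚ[[x,y]]`, let `L(x,y) = (1 − (2xy/(1−x))²)^{1/2}` (the branch with constant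
term `1`, characterized by `L²(1−x)² = (1−x)² − (2xy)²`). Then
`(1−x)^{−2}((x+1)/L − (1/2)((1−x)/(xy))²(1−L)) = ∑_{n,k} C(n,k+1)C(n−k,k) xⁿ y^{2k}`;
the equation defining the left-hand side `B` is stated with denominators cleared as
`2x²y²(1−x)²L·B = 2x²y²(x+1) − (1−x)²(1−L)L`, which determines `B` uniquely. -/
theorem stmt_18 (L B : MvPowerSeries (Fin 2) ℚ)
    (hL : L ^ 2 * (1 - MvPowerSeries.X (0 : Fin 2)) ^ 2 =
      (1 - MvPowerSeries.X (0 : Fin 2)) ^ 2 -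
        (2 * MvPowerSeries.X 0 * MvPowerSeries.X 1) ^ 2)
    (hL0 : MvPowerSeries.constantCoeff L = 1)
    (hB : 2 * MvPowerSeries.X (0 : Fin 2) ^ 2 * MvPowerSeries.X 1 ^ 2 *
        (1 - MvPowerSeries.X 0) ^ 2 * L * B =
      2 * MvPowerSeries.X 0 ^ 2 * MvPowerSeries.X 1 ^ 2 * (MvPowerSeries.X 0 + 1) -
        (1 - MvPowerSeries.X 0) ^ 2 * (1 - L) * L) :
    ∀ n k : ℕ,
      MvPowerSeries.coeff (Finsupp.single 0 n + Finsupp.single 1 (2 * k)) B =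
        (n.choose (k + 1) : ℚ) * ((n - k).choose k : ℚ) ∧
      MvPowerSeries.coeff (Finsupp.single 0 n + Finsupp.single 1 (2 * k + 1)) B = 0 := by
  have hL' := congrArg (MvPowerSeries.finTwoEquiv ℚ) hL
  have hB' := congrArg (MvPowerSeries.finTwoEquiv ℚ) hB
  simp only [map_mul, map_pow, map_sub, map_add, map_one, map_ofNat,
    MvPowerSeries.finTwoEquiv_X_zero, MvPowerSeries.finTwoEquiv_X_one] at hL' hB'
  have hEL := eq_seriesL hL' (by rw [MvPowerSeries.constantCoeff_constantCoeff_finTwoEquiv, hL0])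
  rw [hEL] at hB'
  intro n k
  rw [← MvPowerSeries.coeff_coeff_finTwoEquiv, ← MvPowerSeries.coeff_coeff_finTwoEquiv,
    eq_seriesB hB', coeff_two_mul_add_one_seriesB, map_zero]
  exact ⟨coeff_coeff_two_mul_seriesB_X_mk_one n k, rfl⟩
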